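/- Let L ≥ 1, ρ > 0, h ∈ ℂ^L, a ∈ ℂ^L, and let φ_1,…,φ_L ∈ ℝ with Φ := diag(e^{iφ_1},…,e^{iφ_L}), so (hΦ)_ℓ = h_ℓ e^{iφ_ℓ}. Define M by M_{j,k} := δ_{j,k} − (ρ/(1 + ρ‖h‖²))·conj(h_j)·h_k. Then inf_{α ∈ ℂ} ( ρ‖α (hΦ) − a‖² + |α|² ) = ρ · ( a Φ^H M Φ a^H ), where a Φ^H M Φ a^H := Σ_{j,k} (aΦ^H)_j M_{j,k} conj((aΦ^H)_k). -/

import Mathlib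

/-! Completing the square in `α` gives `Q(α) = D‖α - β‖² + ρ‖a‖² - ρ²|⟨g, a⟩|² / D` with
`D = 1 + ρ‖g‖²` for the precoded channel `g = hΦ`, so the infimum is the constant term.
Expanding the rank-one perturbation `M = I - c hᴴh` of the identity gives
`bMbᴴ = ‖b‖² - c|⟨h, b⟩|²`, and for `b = aΦᴴ` the unit phases cancel:
`‖b‖ = ‖a‖`, `⟨h, b⟩ = ⟨g, a⟩` and `‖h‖ = ‖g‖`. -/

open Complex Finset

/-- The effective-noise energy `Q(α) = ρ‖αh − a‖² + |α|²`. -/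
noncomputable def effNoise {L : ℕ} (ρ : ℝ) (h a : Fin L → ℂ) (α : ℂ) : ℝ :=
  ρ * ∑ ℓ, ‖α * h ℓ - a ℓ‖ ^ 2 + ‖α‖ ^ 2

open ComplexConjugate

lemma Complex.norm_mul_sub_sq (α z w : ℂ) :
    ‖α * z - w‖ ^ 2 = ‖α‖ ^ 2 * ‖z‖ ^ 2 - 2 * (α * (z * conj w)).re + ‖w‖ ^ 2 := by
  simp only [Complex.sq_norm, normSq_sub, normSq_mul, mul_assoc]
  ring

lemma Complex.mul_norm_sq_sub_re_add_eq {D : ℝ} (hD : D ≠ 0) (T α : ℂ) (c : ℝ) :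
    D * ‖α‖ ^ 2 - 2 * (α * T).re + c = D * ‖α - conj T / D‖ ^ 2 + (c - ‖T‖ ^ 2 / D) := by
  have hconj : conj (conj T / (D : ℂ)) = T / D := by simp [map_div₀]
  rw [Complex.sq_norm (α - _), normSq_sub, hconj, normSq_div, normSq_conj, normSq_ofReal,
    ← Complex.sq_norm, ← Complex.sq_norm, mul_div_assoc', div_ofReal_re]
  field_simp
  ring

lemma iInf_mul_norm_sub_sq_add {D : ℝ} (hD : 0 ≤ D) (β : ℂ) (m : ℝ) :
    ⨅ α : ℂ, (D * ‖α - β‖ ^ 2 + m) = m := by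
  have hle : ∀ α : ℂ, m ≤ D * ‖α - β‖ ^ 2 + m := fun α => by
    have := mul_nonneg hD (sq_nonneg ‖α - β‖)
    linarith
  refine le_antisymm ?_ (le_ciInf hle)
  exact (ciInf_le ⟨m, Set.forall_mem_range.2 hle⟩ β).trans (by simp)

theorem Complex.iInf_mul_norm_sq_sub_re_add {D : ℝ} (hD : 0 < D) (T : ℂ) (c : ℝ) :
    ⨅ α : ℂ, (D * ‖α‖ ^ 2 - 2 * (α * T).re + c) = c - ‖T‖ ^ 2 / D := by
  simp only [Complex.mul_norm_sq_sub_re_add_eq hD.ne']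
  exact iInf_mul_norm_sub_sq_add hD.le _ _

lemma effNoise_eq {L : ℕ} (ρ : ℝ) (g a : Fin L → ℂ) (α : ℂ) :
    effNoise ρ g a α = (1 + ρ * ∑ ℓ, ‖g ℓ‖ ^ 2) * ‖α‖ ^ 2
      - 2 * (α * (ρ * ∑ ℓ, g ℓ * conj (a ℓ))).re + ρ * ∑ ℓ, ‖a ℓ‖ ^ 2 := by
  have hre : (α * (ρ * ∑ ℓ, g ℓ * conj (a ℓ))).re = ρ * ∑ ℓ, (α * (g ℓ * conj (a ℓ))).re := by
    rw [mul_left_comm, re_ofReal_mul, mul_sum, re_sum]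
  simp only [effNoise, Complex.norm_mul_sub_sq, hre, sum_add_distrib, sum_sub_distrib, ← mul_sum]
  ring

theorem iInf_effNoise {L : ℕ} {ρ : ℝ} (hρ : 0 ≤ ρ) (g a : Fin L → ℂ) :
    ⨅ α : ℂ, effNoise ρ g a α = ρ * ∑ ℓ, ‖a ℓ‖ ^ 2
      - ρ ^ 2 * ‖∑ ℓ, g ℓ * conj (a ℓ)‖ ^ 2 / (1 + ρ * ∑ ℓ, ‖g ℓ‖ ^ 2) := by
  simp only [effNoise_eq]
  rw [Complex.iInf_mul_norm_sq_sub_re_add (by positivity), norm_mul, norm_real, Real.norm_eq_abs,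
    mul_pow, sq_abs]

lemma sum_sum_mul_one_sub_rankOne_mul {ι : Type*} [Fintype ι] [DecidableEq ι]
    (b h : ι → ℂ) (c : ℂ) :
    ∑ j, ∑ k, b j * ((if j = k then 1 else 0) - c * conj (h j) * h k) * conj (b k)
      = ∑ j, (‖b j‖ ^ 2 : ℂ) - c * ‖∑ k, h k * conj (b k)‖ ^ 2 := by
  have hS : (‖∑ k, h k * conj (b k)‖ ^ 2 : ℂ)
      = (∑ j, b j * conj (h j)) * ∑ k, h k * conj (b k) := by
    rw [← Complex.conj_mul', map_sum]
    simp [mul_comm]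
  simp only [mul_sub, sub_mul, sum_sub_distrib, mul_ite, mul_one, mul_zero, ite_mul,
    zero_mul, sum_ite_eq, mem_univ, if_true, Complex.mul_conj', hS, mul_sum, sum_mul]
  congr 1
  rw [sum_comm]
  refine sum_congr rfl fun j _ => sum_congr rfl fun k _ => ?_
  ring

theorem inf_effNoise_precoded_quadform_general (L : ℕ) (ρ : ℝ) (hρ : 0 < ρ)
    (h a : Fin L → ℂ) (φ : Fin L → ℝ) (M : Matrix (Fin L) (Fin L) ℂ)
    (hM : ∀ j k, M j k = (if j = k then (1 : ℂ) else 0) -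
        ((ρ / (1 + ρ * ∑ ℓ, ‖h ℓ‖ ^ 2) : ℝ) : ℂ) * (starRingEnd ℂ) (h j) * h k) :
    ((⨅ α : ℂ, effNoise ρ (fun ℓ => h ℓ * Complex.exp (Complex.I * (φ ℓ : ℂ))) a α : ℝ) : ℂ) =
      (ρ : ℂ) * ∑ j, ∑ k,
        (a j * Complex.exp (-(Complex.I * (φ j : ℂ)))) * M j k *
          (starRingEnd ℂ) (a k * Complex.exp (-(Complex.I * (φ k : ℂ)))) := by
  have hconj : ∀ θ : ℝ, conj (exp (-(I * θ))) = exp (I * θ) :=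
    fun θ => by rw [← exp_conj]; simp
  have hnorm : ∀ θ : ℝ, ‖exp (-(I * θ))‖ = 1 := fun θ => by
    rw [← norm_conj, hconj, norm_exp_I_mul_ofReal]
  have hcross : ∑ k, h k * conj (a k * exp (-(I * φ k)))
      = ∑ k, h k * exp (I * φ k) * conj (a k) := by
    refine sum_congr rfl fun k _ => ?_
    rw [map_mul, hconj]
    ring
  simp only [hM, sum_sum_mul_one_sub_rankOne_mul, iInf_effNoise hρ.le, hcross, norm_mul,
    hnorm, norm_exp_I_mul_ofReal, mul_one]
  have hD : 0 < 1 + ρ * ∑ ℓ, ‖h ℓ‖ ^ 2 := by positivity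
  push_cast
  field_simp

/-- with a phase precoding matrix `Φ = diag(e^{iφ_ℓ})`, the
minimal effective-noise energy for the precoded channel `hΦ` equals
`ρ · (aΦᴴ M Φaᴴ)` where `M = I − (ρ/(1+ρ‖h‖²)) hᴴ h`. -/
theorem inf_effNoise_precoded_quadform (L : ℕ) (hL : 1 ≤ L) (ρ : ℝ) (hρ : 0 < ρ)
    (h a : Fin L → ℂ) (φ : Fin L → ℝ) (M : Matrix (Fin L) (Fin L) ℂ)
    (hM : ∀ j k, M j k = (if j = k then (1 : ℂ) else 0) -
        ((ρ / (1 + ρ * ∑ ℓ, ‖h ℓ‖ ^ 2) : ℝ) : ℂ) * (starRingEnd ℂ) (h j) * h k) :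
    ((⨅ α : ℂ, effNoise ρ (fun ℓ => h ℓ * Complex.exp (Complex.I * (φ ℓ : ℂ))) a α : ℝ) : ℂ) =
      (ρ : ℂ) * ∑ j, ∑ k,
        (a j * Complex.exp (-(Complex.I * (φ j : ℂ)))) * M j k *
          (starRingEnd ℂ) (a k * Complex.exp (-(Complex.I * (φ k : ℂ)))) :=
  inf_effNoise_precoded_quadform_general L ρ hρ h a φ M hM
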